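/- arXiv:2106.13851 — 5 statements merged into one kernel-verified Lean document; each statement's English description precedes it below -/
import Mathlib

section
/- Let r ≥ 1 and n > 0 be real numbers, and let a : ℕ → ℝ be a sequence with 0 ≤ a(i) for all i, a(0) ≤ n, and such that for every i ∈ ℕ, a(i+1) ≤ a(i) / (r · max(a(i) · r^(2i+1) / n, 1)). Then for every i ∈ ℕ, a(i) ≤ n / r^(2i). -/
/-!
No induction is needed: with `K = n / r ^ (2i+1)` the recurrence reads
`a (i+1) ≤ (a i / max (a i / K) 1) / r`, and `x / max (x / K) 1 ≤ K` for every `x`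
(the quotient equals `K` when `x / K` attains the max, and is `x < K` otherwise).
-/

lemma div_max_div_one_le {α : Type*} [Field α] [LinearOrder α] [IsStrictOrderedRing α]
    {K : α} (hK : 0 < K) (x : α) : x / max (x / K) 1 ≤ K := by
  rcases le_or_gt 1 (x / K) with h | h
  · have hx : x ≠ 0 := by
      rintro rfl
      simp only [zero_div] at h
      exact absurd h zero_lt_one.not_ge
    rw [max_eq_left h, div_div_cancel₀ hx]
  · rw [max_eq_right h.le, div_one]
    exact ((div_lt_one hK).mp h).le

theorem sampleCut_cell_size_bound_general (r n : ℝ) (hr : 1 ≤ r) (hn : 0 < n)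
    (a : ℕ → ℝ) (ha0 : a 0 ≤ n)
    (hrec : ∀ i : ℕ, a (i + 1) ≤ a i / (r * max (a i * r ^ (2 * i + 1) / n) 1)) :
    ∀ i : ℕ, a i ≤ n / r ^ (2 * i) := by
  have hr0 : 0 < r := zero_lt_one.trans_le hr
  rintro (_ | i)
  · simpa using ha0
  · have hK : 0 < n / r ^ (2 * i + 1) := by positivity
    calc a (i + 1) ≤ a i / (r * max (a i * r ^ (2 * i + 1) / n) 1) := hrec i
      _ = a i / max (a i / (n / r ^ (2 * i + 1))) 1 / r := by
        rw [div_div_eq_mul_div, div_div, mul_comm r]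
      _ ≤ n / r ^ (2 * i + 1) / r := by
        gcongr ?_ / r
        exact div_max_div_one_le hK _
      _ = n / r ^ (2 * (i + 1)) := by
        rw [div_div, ← pow_succ, mul_add_one]

/-- Lemma 3.1 core: the sample size attached to a level-`i` cell of the
SampleCut construction decays as `n / r^(2i)`. -/
theorem sampleCut_cell_size_bound (r n : ℝ) (hr : 1 ≤ r) (hn : 0 < n)
    (a : ℕ → ℝ) (ha_nonneg : ∀ i, 0 ≤ a i) (ha0 : a 0 ≤ n)
    (hrec : ∀ i : ℕ, a (i + 1) ≤ a i / (r * max (a i * r ^ (2 * i + 1) / n) 1)) :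
    ∀ i : ℕ, a i ≤ n / r ^ (2 * i) :=
  sampleCut_cell_size_bound_general r n hr hn a ha0 hrec
end

section
/- Let s, m, d be natural numbers with s ≥ 1 and d ≤ m, and let D be a subset of Fin s with |D| = d. Then the number of functions f : Fin m → Fin s whose image contains D (i.e., for every x ∈ D there exists t with f(t) = x) is at most m^d · s^(m−d). Equivalently, for a uniformly random function f : Fin m → Fin s, the probability that every element of D occurs as a value of f is at most (m/s)^d. -/
/-!
A function `f : α → β` whose image contains `D` admits a choice of preimages, i.e. an embedding
`w : D ↪ α` with `f (w x) = x`. There are at most `|α| ^ |D|` such embeddings, and once `w` is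
fixed, `f` is determined by its values on the `|α| - |D|` points outside the range of `w`.
-/

open Finset Function

variable {ι α β : Type*} [Fintype ι] [Fintype α] [Fintype β] [DecidableEq α] [DecidableEq β]

theorem card_filter_extends_le (w : ι ↪ α) (g : ι → β) :
    #{f : α → β | ∀ i, f (w i) = g i} ≤ Fintype.card β ^ (Fintype.card α - Fintype.card ι) := by
  let restrict (f : α → β) : {a // a ∉ Set.range w} → β := fun a => f a
  have restrict_injOn : Set.InjOn restrict {f : α → β | ∀ i, f (w i) = g i} := by
    intro f hf f' hf' hff'
    funext a
    by_cases ha : a ∈ Set.range w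
    · obtain ⟨i, rfl⟩ := ha
      rw [hf i, hf' i]
    · exact congrFun hff' ⟨a, ha⟩
  calc #{f : α → β | ∀ i, f (w i) = g i}
      ≤ #(univ : Finset ({a // a ∉ Set.range w} → β)) :=
        card_le_card_of_injOn restrict (fun _ _ => mem_coe.2 (mem_univ _))
          (by simpa only [coe_filter, mem_univ, true_and] using restrict_injOn)
    _ = Fintype.card β ^ (Fintype.card α - Fintype.card ι) := by
        rw [card_univ, Fintype.card_fun, Fintype.card_subtype_compl, Fintype.card_range]

theorem card_filter_range_supset_le (D : Finset β) :
    #{f : α → β | ∀ x ∈ D, ∃ a, f a = x} ≤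
      Fintype.card α ^ #D * Fintype.card β ^ (Fintype.card α - #D) := by
  have covers_subset : ({f : α → β | ∀ x ∈ D, ∃ a, f a = x} : Finset (α → β)) ⊆
      (univ : Finset (D ↪ α)).biUnion fun w => {f : α → β | ∀ x, f (w x) = x} := by
    intro f hf
    choose w hw using fun x : D => (mem_filter.1 hf).2 x x.2
    have hw_inj : Injective w := fun x y hxy => Subtype.ext (by rw [← hw x, ← hw y, hxy])
    exact mem_biUnion.2 ⟨⟨w, hw_inj⟩, mem_univ _, mem_filter.2 ⟨mem_univ _, hw⟩⟩
  calc _ ≤ #(univ : Finset (D ↪ α)) * Fintype.card β ^ (Fintype.card α - Fintype.card D) :=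
        (card_le_card covers_subset).trans
          (card_biUnion_le_card_mul _ _ _ fun w _ => card_filter_extends_le w _)
    _ ≤ Fintype.card α ^ #D * Fintype.card β ^ (Fintype.card α - #D) := by
        rw [card_univ, Fintype.card_embedding_eq, Fintype.card_coe]
        exact Nat.mul_le_mul_right _ (Nat.descFactorial_le_pow _ _)

theorem count_functions_covering_set_general (s m d : ℕ)
    (D : Finset (Fin s)) (hD : D.card = d) :
    (Finset.univ.filter
        (fun f : Fin m → Fin s => ∀ x ∈ D, ∃ t : Fin m, f t = x)).card ≤
      m ^ d * s ^ (m - d) := by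
  subst hD
  -- `convert`, not `simpa`: here `∃ t : Fin m` is decided by `Nat.decidableExistsFin`, in the
  -- lemma by the generic `Fintype` instance.
  convert card_filter_range_supset_le (α := Fin m) D using 3 <;> rw [Fintype.card_fin]

/-- Lemma 3.2 core: the number of functions `f : Fin m → Fin s` whose image
contains a fixed set `D` of `d` elements is at most `m^d * s^(m-d)`, i.e. a
uniformly random sample of size `m` with replacement contains all `d` fixed
elements with probability at most `(m/s)^d`. -/
theorem count_functions_covering_set (s m d : ℕ) (hs : 1 ≤ s) (hd : d ≤ m)
    (D : Finset (Fin s)) (hD : D.card = d) :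
    (Finset.univ.filter
        (fun f : Fin m → Fin s => ∀ x ∈ D, ∃ t : Fin m, f t = x)).card ≤
      m ^ d * s ^ (m - d) :=
  count_functions_covering_set_general s m d D hD
end

section
/- Let n ≥ 1 be an integer and let i, i', j, j', k, k' be integers with 1 ≤ i, i', j, j', k, k' ≤ n and i ≠ i'. Then −j + 3n·k + 5n²·(i' − i) ≠ −j' + 3n·k'. Equivalently, the intersection point of the horizontal line y = y_{i,j} = −j − 5n²·i with the slope-one line y = x + o_{i',k}, where o_{i',k} = −3n·k − 5n²·i', has x-coordinate y_{i,j} − o_{i',k} = −j + 3n·k + 5n²·(i' − i), and this never equals the x-coordinate x_{j',k'} = −j' + 3n·k' of any black vertical line. -/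
/-!
The black coordinates `-j + 3 n k` all lie in the window `[0, 3 n²)`, so two of them differ by
less than `3 n²`, while distinct bundles shift by a nonzero multiple of `5 n² ≥ 3 n²`.
-/

open Set

theorem neg_add_mul_mem_Ico_zero {n j k : ℤ} (hj₁ : 1 ≤ j) (hj₂ : j ≤ n) (hk₁ : 1 ≤ k)
    (hk₂ : k ≤ n) : -j + 3 * n * k ∈ Ico 0 (3 * n ^ 2) := by
  constructor <;> nlinarith

theorem add_mul_ne_of_mem_Ico {a b w m d : ℤ} (ha : a ∈ Ico 0 w) (hb : b ∈ Ico 0 w)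
    (hwm : w ≤ m) (hd : d ≠ 0) : a + m * d ≠ b := by
  intro h
  have hm : 0 ≤ m := by linarith [ha.1, ha.2]
  have hgap : m ≤ |a - b| := calc
    m = m * 1 := (mul_one m).symm
    _ ≤ m * |d| := mul_le_mul_of_nonneg_left (Int.one_le_abs hd) hm
    _ = |m * d| := by rw [abs_mul, abs_of_nonneg hm]
    _ = |a - b| := by rw [abs_sub_comm, ← h, add_sub_cancel_left]
  linarith [abs_sub_lt_of_nonneg_of_lt ha.1 ha.2 hb.1 hb.2]

theorem no_spurious_triple_intersection_general (n i i' j j' k k' : ℤ)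
    (hj₁ : 1 ≤ j) (hj₂ : j ≤ n) (hj'₁ : 1 ≤ j') (hj'₂ : j' ≤ n)
    (hk₁ : 1 ≤ k) (hk₂ : k ≤ n) (hk'₁ : 1 ≤ k') (hk'₂ : k' ≤ n)
    (hii' : i ≠ i') :
    -j + 3 * n * k + 5 * n ^ 2 * (i' - i) ≠ -j' + 3 * n * k' :=
  add_mul_ne_of_mem_Ico (neg_add_mul_mem_Ico_zero hj₁ hj₂ hk₁ hk₂)
    (neg_add_mul_mem_Ico_zero hj'₁ hj'₂ hk'₁ hk'₂)
    (by nlinarith [sq_nonneg n]) (sub_ne_zero.2 hii'.symm)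

/-- Section 4.2 no-spurious-intersections: a blue horizontal line from bundle
`i`, a red slope-one line from bundle `i' ≠ i`, and a black vertical line are
never concurrent. -/
theorem no_spurious_triple_intersection (n i i' j j' k k' : ℤ) (hn : 1 ≤ n)
    (hi₁ : 1 ≤ i) (hi₂ : i ≤ n) (hi'₁ : 1 ≤ i') (hi'₂ : i' ≤ n)
    (hj₁ : 1 ≤ j) (hj₂ : j ≤ n) (hj'₁ : 1 ≤ j') (hj'₂ : j' ≤ n)
    (hk₁ : 1 ≤ k) (hk₂ : k ≤ n) (hk'₁ : 1 ≤ k') (hk'₂ : k' ≤ n)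
    (hii' : i ≠ i') :
    -j + 3 * n * k + 5 * n ^ 2 * (i' - i) ≠ -j' + 3 * n * k' :=
  no_spurious_triple_intersection_general n i i' j j' k k' hj₁ hj₂ hj'₁ hj'₂ hk₁ hk₂ hk'₁ hk'₂ hii'
end

section
/- Let n ≥ 1 be an integer and let i, i', j, j', k, k' be integers with 1 ≤ i, i', j, j', k, k' ≤ n. Define y_{i,j} = −j − 5n²·i, o_{i',k} = −3n·k − 5n²·i', and x_{j',k'} = −j' + 3n·k'. Then the three lines y = y_{i,j} (horizontal), y = x + o_{i',k} (slope one), and x = x_{j',k'} (vertical) have a common point if and only if i = i', j = j', and k = k'. -/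
/-!
Concurrency of the three lines means `y_{i,j} = x_{j',k'} + o_{i',k}`, that is
`5n²(i' - i) + 3n(k - k') + (j' - j) = 0`. Since `|j' - j| < n ≤ 3n` and
`|3n(k - k') + (j' - j)| < 5n²`, this is an expansion in the mixed radix `(3n, 5n²)` whose
digits must all vanish.
-/

theorem concurrent_horizontal_diagonal_vertical_iff (a b c : ℝ) :
    (∃ p : ℝ × ℝ, p.2 = a ∧ p.2 = p.1 + b ∧ p.1 = c) ↔ a = c + b := by
  constructor
  · rintro ⟨p, hpa, hpb, hpc⟩
    rw [← hpa, hpb, hpc]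
  · intro h
    exact ⟨(c, a), rfl, h, rfl⟩

theorem Int.eq_zero_and_eq_zero_of_mul_add_eq_zero {B q r : ℤ} (hr : |r| < B)
    (h : q * B + r = 0) : q = 0 ∧ r = 0 := by
  have hr0 : r = 0 := Int.eq_zero_of_abs_lt_dvd ⟨-q, by linarith⟩ hr
  have hB : 0 < B := (abs_nonneg r).trans_lt hr
  subst hr0
  exact ⟨(mul_eq_zero.1 (by simpa using h)).resolve_right hB.ne', rfl⟩

theorem Int.abs_sub_lt_of_mem_Icc {n a b : ℤ} (ha₁ : 1 ≤ a) (ha₂ : a ≤ n)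
    (hb₁ : 1 ≤ b) (hb₂ : b ≤ n) : |a - b| < n :=
  abs_sub_lt_iff.2 ⟨by linarith, by linarith⟩

theorem mixed_radix_digits_eq {n i i' j j' k k' : ℤ}
    (hj₁ : 1 ≤ j) (hj₂ : j ≤ n) (hj'₁ : 1 ≤ j') (hj'₂ : j' ≤ n)
    (hk₁ : 1 ≤ k) (hk₂ : k ≤ n) (hk'₁ : 1 ≤ k') (hk'₂ : k' ≤ n)
    (h : (i' - i) * (5 * n ^ 2) + ((k - k') * (3 * n) + (j' - j)) = 0) :
    i = i' ∧ j = j' ∧ k = k' := by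
  have hdj : |j' - j| < n := Int.abs_sub_lt_of_mem_Icc hj'₁ hj'₂ hj₁ hj₂
  have hdk : |k - k'| < n := Int.abs_sub_lt_of_mem_Icc hk₁ hk₂ hk'₁ hk'₂
  have hn : 1 ≤ n := hj₁.trans hj₂
  have hlow : |(k - k') * (3 * n) + (j' - j)| < 5 * n ^ 2 := by
    calc |(k - k') * (3 * n) + (j' - j)|
        ≤ |k - k'| * (3 * n) + |j' - j| := by
          grw [abs_add_le, abs_mul, abs_of_pos (by positivity : (0 : ℤ) < 3 * n)]
      _ ≤ (n - 1) * (3 * n) + (n - 1) := by gcongr <;> linarith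
      _ < 5 * n ^ 2 := by nlinarith
  obtain ⟨hi, hlow0⟩ := Int.eq_zero_and_eq_zero_of_mul_add_eq_zero hlow h
  obtain ⟨hk, hj⟩ := Int.eq_zero_and_eq_zero_of_mul_add_eq_zero (hdj.trans (by linarith)) hlow0
  omega

theorem triple_intersection_iff_clique_general (n i i' j j' k k' : ℤ)
    (hj₁ : 1 ≤ j) (hj₂ : j ≤ n) (hj'₁ : 1 ≤ j') (hj'₂ : j' ≤ n)
    (hk₁ : 1 ≤ k) (hk₂ : k ≤ n) (hk'₁ : 1 ≤ k') (hk'₂ : k' ≤ n) :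
    (∃ p : ℝ × ℝ,
        p.2 = ((-j - 5 * n ^ 2 * i : ℤ) : ℝ) ∧
        p.2 = p.1 + ((-3 * n * k - 5 * n ^ 2 * i' : ℤ) : ℝ) ∧
        p.1 = ((-j' + 3 * n * k' : ℤ) : ℝ)) ↔
      i = i' ∧ j = j' ∧ k = k' := by
  rw [concurrent_horizontal_diagonal_vertical_iff, ← Int.cast_add, Int.cast_inj]
  constructor
  · intro h
    exact mixed_radix_digits_eq hj₁ hj₂ hj'₁ hj'₂ hk₁ hk₂ hk'₁ hk'₂ (by linear_combination h)
  · rintro ⟨rfl, rfl, rfl⟩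
    ring

/-- Section 4.2 combined: the horizontal line `y = y_{i,j}`, the slope-one line
`y = x + o_{i',k}`, and the vertical line `x = x_{j',k'}` have a common point in
`ℝ²` iff `i = i'`, `j = j'`, and `k = k'`. -/
theorem triple_intersection_iff_clique (n i i' j j' k k' : ℤ) (hn : 1 ≤ n)
    (hi₁ : 1 ≤ i) (hi₂ : i ≤ n) (hi'₁ : 1 ≤ i') (hi'₂ : i' ≤ n)
    (hj₁ : 1 ≤ j) (hj₂ : j ≤ n) (hj'₁ : 1 ≤ j') (hj'₂ : j' ≤ n)
    (hk₁ : 1 ≤ k) (hk₂ : k ≤ n) (hk'₁ : 1 ≤ k') (hk'₂ : k' ≤ n) :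
    (∃ p : ℝ × ℝ,
        p.2 = ((-j - 5 * n ^ 2 * i : ℤ) : ℝ) ∧
        p.2 = p.1 + ((-3 * n * k - 5 * n ^ 2 * i' : ℤ) : ℝ) ∧
        p.1 = ((-j' + 3 * n * k' : ℤ) : ℝ)) ↔
      i = i' ∧ j = j' ∧ k = k' :=
  triple_intersection_iff_clique_general n i i' j j' k k' hj₁ hj₂ hj'₁ hj'₂ hk₁ hk₂ hk'₁ hk'₂
end

section
/- Let r ≥ 1 and n > 0 be real numbers, and let a : ℕ → ℝ be a sequence with 0 ≤ a(i) for all i, a(0) ≤ n, and such that for every i ∈ ℕ, a(i+1) ≤ a(i) / (r · max(a(i) · r^(2i+1) / n, 1)). Then for every i ∈ ℕ, the quantity t(i) := max(a(i) · r^(2i+1) / n, 1) satisfies t(i) ≤ r. -/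
/-! Write `s i = a i * r ^ (2 * i + 1) / n`, so that the cutting parameter is `max (s i) 1`.
The recursion gives `s (i + 1) ≤ r * (s i / max (s i) 1)`, and `s / max s 1 ≤ 1` for every `s`,
so `s (i + 1) ≤ r`; and `s 0 ≤ r` because `a 0 ≤ n`. -/

theorem div_max_one_le_one {K : Type*} [Field K] [LinearOrder K] [IsStrictOrderedRing K]
    (s : K) : s / max s 1 ≤ 1 :=
  div_le_one_of_le₀ (le_max_left s 1) (zero_le_one.trans (le_max_right s 1))

theorem mul_pow_div_succ_le {r n a b t : ℝ} (hr : 0 < r) (hn : 0 < n) (ht : 0 < t)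
    (i : ℕ) (hb : b ≤ a / (r * t)) :
    b * r ^ (2 * (i + 1) + 1) / n ≤ r * (a * r ^ (2 * i + 1) / n / t) :=
  calc b * r ^ (2 * (i + 1) + 1) / n ≤ a / (r * t) * r ^ (2 * (i + 1) + 1) / n := by gcongr
    _ = r * (a * r ^ (2 * i + 1) / n / t) := by field_simp; ring

theorem cutting_parameter_le_r_general (r n : ℝ) (hr : 1 ≤ r) (hn : 0 < n)
    (a : ℕ → ℝ) (ha0 : a 0 ≤ n)
    (hrec : ∀ i : ℕ, a (i + 1) ≤ a i / (r * max (a i * r ^ (2 * i + 1) / n) 1)) :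
    ∀ i : ℕ, max (a i * r ^ (2 * i + 1) / n) 1 ≤ r := by
  have hr0 : 0 < r := zero_lt_one.trans_le hr
  rintro (_ | i) <;> refine max_le ?_ hr
  · calc a 0 * r ^ (2 * 0 + 1) / n = a 0 / n * r := by ring
      _ ≤ 1 * r := by gcongr; exact (div_le_one hn).2 ha0
      _ = r := one_mul r
  · set s := a i * r ^ (2 * i + 1) / n
    calc a (i + 1) * r ^ (2 * (i + 1) + 1) / n ≤ r * (s / max s 1) :=
          mul_pow_div_succ_le hr0 hn (zero_lt_one.trans_le (le_max_right s 1)) i (hrec i)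
      _ ≤ r * 1 := by gcongr; exact div_max_one_le_one s
      _ = r := mul_one r

/-- Lemma 3.3 support: the cutting parameter `t(i) = max(a(i) r^(2i+1) / n, 1)`
of the SampleCut construction never exceeds `r`. -/
theorem cutting_parameter_le_r (r n : ℝ) (hr : 1 ≤ r) (hn : 0 < n)
    (a : ℕ → ℝ) (ha_nonneg : ∀ i, 0 ≤ a i) (ha0 : a 0 ≤ n)
    (hrec : ∀ i : ℕ, a (i + 1) ≤ a i / (r * max (a i * r ^ (2 * i + 1) / n) 1)) :
    ∀ i : ℕ, max (a i * r ^ (2 * i + 1) / n) 1 ≤ r :=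
  cutting_parameter_le_r_general r n hr hn a ha0 hrec
end
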